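/- Under any feasible joint distribution π, for π-almost every posterior mean x < θ*, the conditional distribution π_x over types is the point mass at x (i.e., the type x is fully revealed), where θ* is the unique crossing point of the cost function with the 45° line. -/

import Mathlib

/-!
Taking `B = univ` in the prices-as-means constraint gives `min θ (c θ) ≤ x` almost surely.
Below the fixed point `θs` this forces `θ ≤ x`: for `θ < θs` the minimum is `θ`, while for
`θ ≥ θs` monotonicity gives `c θ ≥ c θs = θs > x`. So on `{x < θs}` the martingale integrand
`x - θ` is nonnegative with zero integral, hence vanishes almost everywhere.
-/

open Set MeasureTheory

theorem MonotoneOn.exists_measurable_eqOn_Icc {c : ℝ → ℝ} {a b : ℝ}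
    (hc : MonotoneOn c (Icc a b)) : ∃ g : ℝ → ℝ, Measurable g ∧ EqOn c g (Icc a b) := by
  obtain ⟨g, hg, hcg⟩ := hc.exists_monotone_extension (bddBelow_Icc.mono hc.image_Icc_subset)
    (bddAbove_Icc.mono hc.image_Icc_subset)
  exact ⟨g, hg.measurable, hcg⟩

section

variable {α : Type*} [MeasurableSpace α] {μ : Measure α}

theorem ae_not_of_integral_ite_eq_zero [IsFiniteMeasure μ] {P : α → Prop} [DecidablePred P]
    (hP : NullMeasurableSet {a | P a} μ) (h : ∫ a, (if P a then (1 : ℝ) else 0) ∂μ = 0) :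
    ∀ᵐ a ∂μ, ¬ P a := by
  have hind : (fun a => if P a then (1 : ℝ) else 0) = {a | P a}.indicator 1 := by
    ext a; simp [Set.indicator_apply]
  rw [hind, integral_indicator₀ hP, Pi.one_def, setIntegral_const, smul_eq_mul, mul_one,
    measureReal_eq_zero_iff] at h
  exact measure_eq_zero_iff_ae_notMem.1 h

theorem ae_eq_of_setIntegral_sub_eq_zero {X Y : α → ℝ} {s : Set α} (hs : MeasurableSet s)
    (hint : IntegrableOn (fun a => Y a - X a) s μ) (hle : ∀ᵐ a ∂μ, a ∈ s → X a ≤ Y a)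
    (h : ∫ a in s, (Y a - X a) ∂μ = 0) : ∀ᵐ a ∂μ, a ∈ s → X a = Y a := by
  have hnonneg : 0 ≤ᵐ[μ.restrict s] fun a => Y a - X a :=
    (ae_restrict_iff' hs).2 (hle.mono fun a ha has => sub_nonneg.2 (ha has))
  have hzero := (setIntegral_eq_zero_iff_of_nonneg_ae hnonneg hint).1 h
  refine (ae_restrict_iff' hs).1 (hzero.mono fun a ha => ?_)
  exact (sub_eq_zero.1 ha).symm

end

theorem le_of_min_le_of_lt_fixedPoint {c : ℝ → ℝ} {θs θ x : ℝ} (hc : MonotoneOn c (Icc 0 1))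
    (hcross : c θs = θs) (hbelow : ∀ θ ∈ Ico (0:ℝ) θs, θ < c θ) (hθ : θ ∈ Icc (0:ℝ) 1)
    (hx : 0 ≤ x) (hxθs : x < θs) (hmin : min θ (c θ) ≤ x) : θ ≤ x := by
  by_cases hθθs : θ < θs
  · rwa [min_eq_left (hbelow θ ⟨hθ.1, hθθs⟩).le] at hmin
  · push Not at hθθs
    have hcθ : θs ≤ c θ := hcross ▸ hc ⟨by linarith, by linarith [hθ.2]⟩ hθ hθθs
    linarith [le_min hθθs hcθ]

theorem means_below_cutoff_fully_revealed_general
    (c : ℝ → ℝ) (θs : ℝ)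
    (π : Measure (ℝ × ℝ)) [IsProbabilityMeasure π]
    (hc_mono : StrictMonoOn c (Icc (0:ℝ) 1))
    (hcross : c θs = θs)
    (hbelow : ∀ θ ∈ Ico (0:ℝ) θs, c θ > θ)
    -- feasibility of π
    (hsupp : π ((Icc (0:ℝ) 1 ×ˢ Icc (0:ℝ) 1)ᶜ) = 0)
    (hM : ∀ B : Set ℝ, MeasurableSet B →
      ∫ p in (univ : Set ℝ) ×ˢ B, (p.2 - p.1) ∂π = 0)
    (hPM : ∀ B : Set ℝ, MeasurableSet B →
      ∫ p in (univ : Set ℝ) ×ˢ B, (if min p.1 (c p.1) > p.2 then (1:ℝ) else 0) ∂π = 0) :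
    π {p : ℝ × ℝ | p.2 < θs ∧ p.1 ≠ p.2} = 0 := by
  have hsq : ∀ᵐ p ∂π, p ∈ Icc (0:ℝ) 1 ×ˢ Icc (0:ℝ) 1 := mem_ae_iff.2 hsupp
  have hmeas : NullMeasurableSet {p : ℝ × ℝ | min p.1 (c p.1) > p.2} π := by
    obtain ⟨g, hg, hcg⟩ := hc_mono.monotoneOn.exists_measurable_eqOn_Icc
    refine (measurableSet_lt measurable_snd
      (measurable_fst.min (hg.comp measurable_fst))).nullMeasurableSet.congr ?_
    filter_upwards [hsq] with p hp
    change (p.2 < min p.1 (g p.1)) = (p.2 < min p.1 (c p.1))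
    rw [hcg hp.1]
  have hmin : ∀ᵐ p ∂π, ¬ min p.1 (c p.1) > p.2 := by
    have := hPM univ MeasurableSet.univ
    rw [univ_prod_univ, Measure.restrict_univ] at this
    exact ae_not_of_integral_ite_eq_zero hmeas this
  have hle : ∀ᵐ p ∂π, p ∈ (univ : Set ℝ) ×ˢ Iio θs → p.1 ≤ p.2 := by
    filter_upwards [hsq, hmin] with p hp hp_min hpθs
    exact le_of_min_le_of_lt_fixedPoint hc_mono.monotoneOn hcross hbelow hp.1 hp.2.1 hpθs.2
      (not_lt.1 hp_min)
  have hint : Integrable (fun p : ℝ × ℝ => p.2 - p.1) π := by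
    refine .of_bound (by fun_prop) 1 ?_
    filter_upwards [hsq] with p ⟨⟨h0, h1⟩, ⟨h0', h1'⟩⟩
    rw [Real.norm_eq_abs, abs_sub_le_iff]
    constructor <;> linarith
  have heq := ae_eq_of_setIntegral_sub_eq_zero (MeasurableSet.univ.prod measurableSet_Iio)
    hint.integrableOn hle (hM _ measurableSet_Iio)
  simpa [and_comm] using ae_iff.1 heq

/-- Under any feasible joint distribution π, π-almost every posterior
mean x < θ* has its conditional distribution over types equal to the point mass at x:
equivalently, π puts no mass on pairs (θ,x) with x < θ* and θ ≠ x. -/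
theorem means_below_cutoff_fully_revealed
    (f c : ℝ → ℝ) (θs : ℝ)
    (π : Measure (ℝ × ℝ)) [IsProbabilityMeasure π]
    (hf : Measurable f) (hfpos : ∀ θ ∈ Icc (0:ℝ) 1, 0 < f θ)
    (hc_pos : ∀ θ ∈ Icc (0:ℝ) 1, 0 < c θ)
    (hc_mono : StrictMonoOn c (Icc (0:ℝ) 1))
    (hc_cont : ContinuousOn c (Icc (0:ℝ) 1))
    (hθs : θs ∈ Ioo (0:ℝ) 1)
    (hcross : c θs = θs)
    (hbelow : ∀ θ ∈ Ico (0:ℝ) θs, c θ > θ)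
    (habove : ∀ θ ∈ Ioc θs 1, c θ < θ)
    -- feasibility of π
    (hsupp : π ((Icc (0:ℝ) 1 ×ˢ Icc (0:ℝ) 1)ᶜ) = 0)
    (hBP : Measure.map Prod.fst π
      = (volume.restrict (Icc (0:ℝ) 1)).withDensity (fun θ => ENNReal.ofReal (f θ)))
    (hM : ∀ B : Set ℝ, MeasurableSet B →
      ∫ p in (univ : Set ℝ) ×ˢ B, (p.2 - p.1) ∂π = 0)
    (hPM : ∀ B : Set ℝ, MeasurableSet B →
      ∫ p in (univ : Set ℝ) ×ˢ B, (if min p.1 (c p.1) > p.2 then (1:ℝ) else 0) ∂π = 0) :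
    π {p : ℝ × ℝ | p.2 < θs ∧ p.1 ≠ p.2} = 0 :=
  means_below_cutoff_fully_revealed_general c θs π hc_mono hcross hbelow hsupp hM hPM
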